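/- The monomial map ψ associated to C^q_{p,m} is injective on standard monomials: if two multichains α_{(1)}^{(a_1)} ≤ ⋯ ≤ α_{(j)}^{(a_j)} and β_{(1)}^{(b_1)} ≤ ⋯ ≤ β_{(j')}^{(b_{j'})} in C^q_{p,m} have ψ(product of first) = ψ(product of second) in k[X], then j = j' and the multichains are equal. -/

import Mathlib

open MvPolynomial

def QRow (p m : ℕ) : Type :=
  {α : Fin p → ℕ // StrictMono α ∧ ∀ i, 1 ≤ α i ∧ α i ≤ m + p}

def QElt (p m : ℕ) : Type := QRow p m × ℕ

def qle {p m : ℕ} (x y : QElt p m) : Prop :=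
  x.2 ≤ y.2 ∧ ∀ i j : Fin p, (j : ℕ) = (i : ℕ) + (y.2 - x.2) → x.1.1 i ≤ y.1.1 j

noncomputable def leadExp {p : ℕ} (α : Fin p → ℕ) (a : ℕ) : (ℕ × ℕ × ℕ) →₀ ℕ :=
  ∑ t : Fin p,
    if (t : ℕ) < p - a % p then
      Finsupp.single ((a % p + t : ℕ), α ⟨p - 1 - t, by have := t.isLt; omega⟩, a / p) 1
    else
      Finsupp.single (((t : ℕ) - (p - a % p)),
        α ⟨a % p - 1 - ((t : ℕ) - (p - a % p)),
          by have := t.isLt; have := Nat.mod_lt a t.pos; omega⟩, a / p + 1) 1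

/-- The monomial map `ψ` on a variable `α^{(a)}`. -/
noncomputable def psiMono (k : Type) [Field k] {p m : ℕ} (z : QElt p m) :
    MvPolynomial (ℕ × ℕ × ℕ) k :=
  monomial (leadExp z.1.1 z.2) 1


/-! `ψ(α^{(a)})` has exactly one variable in each row (see `rowKey`). Along a chain of
`C^q_{p,m}` the (level, column) pair of the row-`r` variable increases lexicographically, so the
row-`r` part of the image of a multichain, sorted, lists these pairs in chain order. Hence the
image determines each element's pair in every row, and an element is recovered from its `p`
pairs: the levels give `a`, the columns give `α`. -/

theorem Fin.eq_of_monotone_of_map_univ_eq {α : Type*} [PartialOrder α] {n : ℕ}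
    {f g : Fin n → α} (hf : Monotone f) (hg : Monotone g)
    (h : Finset.univ.val.map f = Finset.univ.val.map g) : f = g := by
  rw [Fin.univ_val_map, Fin.univ_val_map, Multiset.coe_eq_coe] at h
  exact List.ofFn_injective (h.eq_of_sortedLE hf.sortedLE_ofFn hg.sortedLE_ofFn)

theorem Nat.eq_of_forall_add_div_eq {p a b : ℕ} (hp : 0 < p)
    (h : ∀ c < p, (a + c) / p = (b + c) / p) : a = b := by
  wlog hab : a ≤ b generalizing a b
  · exact (this (fun c hc => (h c hc).symm) (le_of_not_ge hab)).symm
  by_contra hne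
  -- with `c = p - 1 - a % p`, `a + c + 1` is a multiple of `p`
  have := Nat.mod_lt a hp
  have := Nat.div_add_mod a p
  have ha : (a + (p - 1 - a % p)) / p = a / p :=
    ((Nat.div_mod_unique (d := a / p) (c := p - 1) hp).2 ⟨by omega, by omega⟩).1
  have hb : a / p + 1 ≤ (b + (p - 1 - a % p)) / p := by
    rw [Nat.le_div_iff_mul_le hp, add_mul, Nat.mul_comm]
    omega
  have := h (p - 1 - a % p) (by omega)
  omega

lemma leadExp_eq_sum {p : ℕ} (α : Fin p → ℕ) (a : ℕ) :
    leadExp α a = ∑ t : Fin p, Finsupp.single ((a + t) % p, α t.rev, (a + t) / p) 1 := by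
  refine Finset.sum_congr rfl fun t _ => ?_
  have ht := t.isLt
  have hmod := Nat.mod_lt a t.pos
  have hdiv := Nat.div_add_mod a p
  split_ifs with h
  · obtain ⟨hq, hr⟩ := (Nat.div_mod_unique (a := a + t) (d := a / p) (c := a % p + t) t.pos).2
      ⟨by omega, by omega⟩
    rw [hq, hr]
    congr 3
    exact congrArg α (Fin.ext (by simp only [Fin.val_rev]; omega))
  · obtain ⟨hq, hr⟩ := (Nat.div_mod_unique (a := a + t) (d := a / p + 1) (c := t - (p - a % p))
      t.pos).2 ⟨by rw [Nat.mul_add]; omega, by omega⟩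
    rw [hq, hr]
    congr 3
    exact congrArg α (Fin.ext (by simp only [Fin.val_rev]; omega))

section rows

variable {p : ℕ}

def rowVar (r : Fin p) (y : ℕ ×ₗ ℕ) : ℕ × ℕ × ℕ :=
  (r, (ofLex y).2, (ofLex y).1)

lemma rowVar_inj {r r' : Fin p} {y y' : ℕ ×ₗ ℕ} :
    rowVar r y = rowVar r' y' ↔ r = r' ∧ y = y' := by
  rw [rowVar, rowVar, Prod.mk.injEq, Prod.mk.injEq, Fin.val_inj, and_comm (a := (ofLex y).2 = _),
    ← Prod.ext_iff, ofLex_inj]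

variable [NeZero p]

/-- The variable of `ψ(α^{(a)})` in row `r` (0-based) is `x_{r, α_{s % p}}^{(s / p)}` with
`s = a + (p - 1 - r)`; `rowKey` is its (level, column) pair, compared lexicographically. -/
def rowKey (α : Fin p → ℕ) (a : ℕ) (r : Fin p) : ℕ ×ₗ ℕ :=
  toLex ((a + r.rev) / p, α (Fin.ofNat p (a + r.rev)))

lemma rowKey_add (α : Fin p → ℕ) (a : ℕ) (t : Fin p) :
    rowKey α a (Fin.ofNat p a + t) = toLex ((a + t) / p, α t.rev) := by
  have hrev : ((Fin.ofNat p (a + t)).rev : ℕ) = p - ((a + t) % p + 1) := by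
    rw [Fin.val_rev, Fin.val_ofNat]
  have := Nat.div_add_mod (a + t) p
  have := Nat.mod_lt (a + t) t.pos
  obtain ⟨hq, hr⟩ := (Nat.div_mod_unique (a := a + (p - ((a + t) % p + 1))) (d := (a + t) / p)
    (c := t.rev) t.pos).2 ⟨by rw [Fin.val_rev]; omega, t.rev.isLt⟩
  rw [rowKey, Fin.ofNat_add, hrev, hq]
  exact congrArg (fun v => toLex (_, α v)) (Fin.ext (by rw [Fin.val_ofNat, hr]))

lemma leadExp_eq_sum_rowVar (α : Fin p → ℕ) (a : ℕ) :
    leadExp α a = ∑ r : Fin p, Finsupp.single (rowVar r (rowKey α a r)) 1 := by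
  rw [leadExp_eq_sum]
  refine Fintype.sum_equiv (Equiv.addLeft (Fin.ofNat p a)) _ _ fun t => ?_
  rw [Equiv.coe_addLeft, rowKey_add, rowVar, Fin.val_add, Fin.val_ofNat, Nat.mod_add_mod]
  rfl

lemma sum_leadExp_apply_rowVar {J : ℕ} (α : Fin J → Fin p → ℕ) (a : Fin J → ℕ)
    (r : Fin p) (y : ℕ ×ₗ ℕ) :
    (∑ i, leadExp (α i) (a i)) (rowVar r y) =
      Multiset.count y (Finset.univ.val.map fun i => rowKey (α i) (a i) r) := by
  classical
  simp only [leadExp_eq_sum_rowVar, Finsupp.finsetSum_apply, Finsupp.single_apply, rowVar_inj,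
    ite_and, Finset.sum_ite_eq', Finset.mem_univ, if_true, Finset.sum_boole, Nat.cast_id,
    Multiset.count_map, eq_comm (a := y)]
  rfl

lemma rowKey_le_of_qle {m : ℕ} {x y : QElt p m} (h : qle x y) (r : Fin p) :
    rowKey x.1.1 x.2 r ≤ rowKey y.1.1 y.2 r := by
  obtain ⟨hab, hαβ⟩ := h
  rw [rowKey, rowKey, Prod.Lex.toLex_le_toLex]
  rcases (Nat.div_le_div_right (c := p) (Nat.add_le_add_right hab r.rev)).lt_or_eq with hlt | heq
  · exact .inl hlt
  · refine .inr ⟨heq, hαβ _ _ ?_⟩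
    have h₁ := Nat.div_add_mod (x.2 + r.rev) p
    have h₂ := Nat.div_add_mod (y.2 + r.rev) p
    rw [heq] at h₁
    simp only [Fin.val_ofNat]
    omega

lemma eq_of_rowKey_eq {α β : Fin p → ℕ} {a b : ℕ}
    (h : ∀ r, rowKey α a r = rowKey β b r) :
    a = b ∧ α = β := by
  have hlevel : ∀ c < p, (a + c) / p = (b + c) / p := fun c hc => by
    simpa [rowKey] using congrArg (fun z => (ofLex z).1) (h (Fin.rev ⟨c, hc⟩))
  obtain rfl := Nat.eq_of_forall_add_div_eq (NeZero.pos p) hlevel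
  refine ⟨rfl, funext fun i => ?_⟩
  have hi : Fin.ofNat p (a + (i - Fin.ofNat p a).rev.rev) = i := by
    rw [Fin.rev_rev, ← Fin.ofNat_add, add_sub_cancel]
  simpa only [rowKey, hi, ofLex_toLex] using
    congrArg (fun z => (ofLex z).2) (h (i - Fin.ofNat p a).rev)

end rows

open Finset in
theorem psi_injective_on_standard_monomials_general (k : Type) [Field k] (p m : ℕ)
    (hp : 0 < p)
    (j j' : ℕ) (c : Fin j → QElt p m) (c' : Fin j' → QElt p m)
    (hchain : ∀ i i' : Fin j, i ≤ i' → qle (c i) (c i'))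
    (hchain' : ∀ i i' : Fin j', i ≤ i' → qle (c' i) (c' i'))
    (heq : (∏ i : Fin j, psiMono k (c i)) = ∏ i : Fin j', psiMono k (c' i)) :
    ∃ h : j = j', ∀ i : Fin j, c i = c' (Fin.cast h i) := by
  have : NeZero p := ⟨hp.ne'⟩
  have hexp : ∑ i, leadExp (c i).1.1 (c i).2 = ∑ i, leadExp (c' i).1.1 (c' i).2 := by
    simp only [psiMono, ← monomial_sum_one] at heq
    exact monomial_left_injective one_ne_zero heq
  have hrows (r : Fin p) : univ.val.map (fun i => rowKey (c i).1.1 (c i).2 r) =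
      univ.val.map (fun i => rowKey (c' i).1.1 (c' i).2 r) :=
    Multiset.ext.2 fun y => by
      rw [← sum_leadExp_apply_rowVar, hexp, sum_leadExp_apply_rowVar]
  obtain rfl : j = j' := by simpa using congrArg Multiset.card (hrows 0)
  refine ⟨rfl, fun i => ?_⟩
  have hkey (r : Fin p) : rowKey (c i).1.1 (c i).2 r = rowKey (c' i).1.1 (c' i).2 r :=
    congrFun (Fin.eq_of_monotone_of_map_univ_eq (fun i i' h => rowKey_le_of_qle (hchain i i' h) r)
      (fun i i' h => rowKey_le_of_qle (hchain' i i' h) r) (hrows r)) i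
  obtain ⟨ha, hα⟩ := eq_of_rowKey_eq hkey
  exact Prod.ext (Subtype.ext hα) ha

/-- `ψ` is injective on standard monomials: if two multichains of
`C^q_{p,m}` have the same image under `ψ` (product of the corresponding monomials
in `k[X]`), then they have the same length and are equal. -/
theorem psi_injective_on_standard_monomials (k : Type) [Field k] (p m n q : ℕ)
    (hp : 0 < p) (hm : 0 < m) (hq : q ≤ n * p)
    (j j' : ℕ) (c : Fin j → QElt p m) (c' : Fin j' → QElt p m)
    (hc : ∀ i, (c i).2 ≤ q) (hc' : ∀ i, (c' i).2 ≤ q)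
    (hchain : ∀ i i' : Fin j, i ≤ i' → qle (c i) (c i'))
    (hchain' : ∀ i i' : Fin j', i ≤ i' → qle (c' i) (c' i'))
    (heq : (∏ i : Fin j, psiMono k (c i)) = ∏ i : Fin j', psiMono k (c' i)) :
    ∃ h : j = j', ∀ i : Fin j, c i = c' (Fin.cast h i) :=
  psi_injective_on_standard_monomials_general k p m hp j j' c c' hchain hchain' heq
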